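/- arXiv:2401.00322 — 2 statements merged into one kernel-verified Lean document; each statement's English description precedes it below -/
import Mathlib

section
/- Let 𝒯 be a backward linear transfer on P(X) × P(X) which is bounded above. Then 𝒯 has bounded oscillations: there is a constant K such that |𝒯_n(μ, ν) − n c(𝒯)| ≤ K for all μ, ν ∈ P(X) and all n ∈ ℕ; consequently 𝒯_n(μ, ν)/n → c(𝒯) uniformly on P(X) × P(X), and for every g ∈ C(X), T^n g(x)/n → −c(𝒯) uniformly in x ∈ X. -/
/-!
Since `m ≤ 𝒯 ≤ M`, every `𝒯_n` is finite and `𝒯_{n+k} = 𝒯_n ⋆ 𝒯_k`. Hence `a_n = inf 𝒯_n` is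
superadditive. Routing a path through arbitrary endpoints,
`𝒯_n(μ, ν) ≤ 𝒯(μ, μ') + 𝒯_{n-2}(μ', ν') + 𝒯(ν', ν)`, gives
`𝒯_n(μ, ν) ≤ a_{n-2} + 2M ≤ a_n + 2(M - m)`: the oscillation of `𝒯_n` is bounded uniformly
in `n`. So `a_n` is also subadditive up to `4(M - m)`, and Fekete's argument applied to both
inequalities puts `a_n` within `4(M - m)` of `n c(𝒯)`.
The uniform limits follow after dividing by `n`, using `|∫ g dσ| ≤ ‖g‖` for `T^n g`.
-/

open MeasureTheory Filter Topology
open scoped ENNReal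

/-- The Dirac mass at `x` as a probability measure. -/
noncomputable def diracP {X : Type*} [MeasurableSpace X] (x : X) :
    MeasureTheory.ProbabilityMeasure X :=
  ⟨MeasureTheory.Measure.dirac x, inferInstance⟩

/-- The `n`-fold inf-convolution iterates of a transfer functional:
`iterT 𝒯 n` is `𝒯_{n+1} = 𝒯 ⋆ ⋯ ⋆ 𝒯` (`n+1` factors). -/
noncomputable def iterT {X : Type*} [MeasurableSpace X]
    (𝒯 : ProbabilityMeasure X → ProbabilityMeasure X → EReal) :
    ℕ → ProbabilityMeasure X → ProbabilityMeasure X → EReal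
  | 0 => 𝒯
  | n + 1 => fun μ ν => ⨅ σ : ProbabilityMeasure X, 𝒯 μ σ + iterT 𝒯 n σ ν

open Set

namespace EReal

variable {ι : Sort*}

lemma add_iInf {x : EReal} (hx : x ≠ ⊥) (hx' : x ≠ ⊤) (f : ι → EReal) :
    x + ⨅ i, f i = ⨅ i, x + f i :=
  Monotone.map_iInf_of_continuousAt
    ((continuousAt_add (Or.inl hx') (Or.inl hx)).comp (continuousAt_const.prodMk continuousAt_id))
    (fun _ _ h => by gcongr) (add_top_of_ne_bot hx)

lemma iInf_add {x : EReal} (hx : x ≠ ⊥) (hx' : x ≠ ⊤) (f : ι → EReal) :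
    (⨅ i, f i) + x = ⨅ i, f i + x := by
  simpa only [add_comm x] using add_iInf hx hx' f

variable [Nonempty ι] {f : ι → ℝ}

lemma coe_ciInf (hf : BddBelow (range f)) : ((⨅ i, f i : ℝ) : EReal) = ⨅ i, (f i : EReal) :=
  Monotone.map_ciInf_of_continuousAt continuous_coe_real_ereal.continuousAt coe_strictMono.monotone hf

lemma coe_ciSup (hf : BddAbove (range f)) : ((⨆ i, f i : ℝ) : EReal) = ⨆ i, (f i : EReal) :=
  Monotone.map_ciSup_of_continuousAt continuous_coe_real_ereal.continuousAt coe_strictMono.monotone hf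

lemma abs_toReal_iSup_coe_sub_le {r K : ℝ} (h : ∀ i, |f i - r| ≤ K) :
    |(⨆ i, (f i : EReal)).toReal - r| ≤ K := by
  have hbdd : BddAbove (range f) :=
    ⟨r + K, forall_mem_range.2 fun i => by linarith [(abs_le.1 (h i)).2]⟩
  obtain ⟨i⟩ := ‹Nonempty ι›
  rw [← coe_ciSup hbdd, toReal_coe, abs_le]
  constructor
  · linarith [(abs_le.1 (h i)).1, le_ciSup hbdd i]
  · linarith [ciSup_le fun i => show f i ≤ r + K by linarith [(abs_le.1 (h i)).2]]

end EReal

lemma tendsto_const_div_natCast_add_one_nhds_zero (C : ℝ) :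
    Tendsto (fun n : ℕ => C / ((n : ℝ) + 1)) atTop (𝓝 0) := by
  simpa [div_eq_mul_one_div C] using (tendsto_one_div_add_atTop_nhds_zero_nat (𝕜 := ℝ)).const_mul C

/-- Fekete's lemma, in the indexing of `iterT`: `a n` is the cost of `n + 1` steps. -/
lemma succ_mul_le_of_add_succ_le {a : ℕ → ℝ} {c : ℝ} (hsub : ∀ n k, a (n + k + 1) ≤ a n + a k)
    (hlim : Tendsto (fun n : ℕ => a n / ((n : ℝ) + 1)) atTop (𝓝 c)) (n : ℕ) :
    ((n : ℝ) + 1) * c ≤ a n := by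
  set φ : ℕ → ℕ := fun j => (n + 1) * j + n
  have hφ : Tendsto φ atTop atTop :=
    tendsto_atTop_mono (fun j => show j ≤ (n + 1) * j + n by nlinarith) tendsto_id
  have hmul : ∀ j : ℕ, a (φ j) ≤ ((j : ℝ) + 1) * a n := by
    intro j
    induction j with
    | zero => simp [φ]
    | succ j ih =>
      have h := hsub (φ j) n
      rw [show φ (j + 1) = φ j + n + 1 by simp only [φ]; ring]
      push_cast
      linarith
  have hdiv : ∀ j : ℕ, a (φ j) / ((φ j : ℝ) + 1) ≤ a n / ((n : ℝ) + 1) := by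
    intro j
    calc a (φ j) / ((φ j : ℝ) + 1) = a (φ j) / (((j : ℝ) + 1) * ((n : ℝ) + 1)) := by
          simp only [φ]; push_cast; ring
      _ ≤ ((j : ℝ) + 1) * a n / (((j : ℝ) + 1) * ((n : ℝ) + 1)) := by gcongr; exact hmul j
      _ = a n / ((n : ℝ) + 1) := mul_div_mul_left _ _ (by positivity)
  exact (le_div_iff₀' (by positivity)).1 (le_of_tendsto' (hlim.comp hφ) hdiv)

lemma tendstoUniformly_div_succ_of_abs_sub_le {α : Type*} {f : ℕ → α → ℝ} {c K : ℝ}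
    (h : ∀ n x, |f n x - ((n : ℝ) + 1) * c| ≤ K) :
    TendstoUniformly (fun n x => f n x / ((n : ℝ) + 1)) (fun _ => c) atTop := by
  rw [Metric.tendstoUniformly_iff]
  intro ε hε
  filter_upwards [(tendsto_const_div_natCast_add_one_nhds_zero K).eventually (gt_mem_nhds hε)]
    with n hn x
  have hn1 : (0 : ℝ) < (n : ℝ) + 1 := by positivity
  calc dist c (f n x / ((n : ℝ) + 1)) = |f n x - ((n : ℝ) + 1) * c| / ((n : ℝ) + 1) := by
        rw [dist_comm, Real.dist_eq, div_sub' hn1.ne', abs_div, abs_of_pos hn1]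
    _ ≤ K / ((n : ℝ) + 1) := by gcongr; exact h n x
    _ < ε := hn

section iterT

variable {X : Type*} [MeasurableSpace X] {𝒯 : ProbabilityMeasure X → ProbabilityMeasure X → EReal}
  {m M : ℝ}

lemma iterT_le (hM : ∀ μ ν, 𝒯 μ ν ≤ M) (n : ℕ) (μ ν : ProbabilityMeasure X) :
    iterT 𝒯 n μ ν ≤ (((n : ℝ) + 1) * M : ℝ) := by
  induction n generalizing μ with
  | zero => simpa [iterT] using hM μ ν
  | succ n ih =>
    calc iterT 𝒯 (n + 1) μ ν ≤ 𝒯 μ ν + iterT 𝒯 n ν ν := iInf_le _ ν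
      _ ≤ (M : EReal) + (((n : ℝ) + 1) * M : ℝ) := add_le_add (hM μ ν) (ih ν)
      _ = ((((n + 1 : ℕ) : ℝ) + 1) * M : ℝ) := by rw [← EReal.coe_add]; congr 1; push_cast; ring

lemma le_iterT (hm : ∀ μ ν, m ≤ 𝒯 μ ν) (n : ℕ) (μ ν : ProbabilityMeasure X) :
    (((n : ℝ) + 1) * m : ℝ) ≤ iterT 𝒯 n μ ν := by
  induction n generalizing μ with
  | zero => simpa [iterT] using hm μ ν
  | succ n ih =>
    refine le_iInf fun σ => ?_
    calc ((((n + 1 : ℕ) : ℝ) + 1) * m : ℝ) = (m : EReal) + (((n : ℝ) + 1) * m : ℝ) := by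
          rw [← EReal.coe_add]; congr 1; push_cast; ring
      _ ≤ 𝒯 μ σ + iterT 𝒯 n σ ν := add_le_add (hm μ σ) (ih σ)

lemma iterT_ne_top (hM : ∀ μ ν, 𝒯 μ ν ≤ M) (n : ℕ) (μ ν : ProbabilityMeasure X) :
    iterT 𝒯 n μ ν ≠ ⊤ :=
  ne_top_of_le_ne_top (EReal.coe_ne_top _) (iterT_le hM n μ ν)

lemma iterT_ne_bot (hm : ∀ μ ν, m ≤ 𝒯 μ ν) (n : ℕ) (μ ν : ProbabilityMeasure X) :
    iterT 𝒯 n μ ν ≠ ⊥ :=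
  ne_bot_of_le_ne_bot (EReal.coe_ne_bot _) (le_iterT hm n μ ν)

variable (𝒯) in
noncomputable def infIterT (n : ℕ) : ℝ :=
  ⨅ p : ProbabilityMeasure X × ProbabilityMeasure X, (iterT 𝒯 n p.1 p.2).toReal

variable (hm : ∀ μ ν, m ≤ 𝒯 μ ν) (hM : ∀ μ ν, 𝒯 μ ν ≤ M)
include hm hM

lemma coe_toReal_iterT (n : ℕ) (μ ν : ProbabilityMeasure X) :
    ((iterT 𝒯 n μ ν).toReal : EReal) = iterT 𝒯 n μ ν :=
  EReal.coe_toReal (iterT_ne_top hM n μ ν) (iterT_ne_bot hm n μ ν)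

lemma iterT_add (n k : ℕ) (μ ν : ProbabilityMeasure X) :
    iterT 𝒯 (n + k + 1) μ ν = ⨅ σ, iterT 𝒯 n μ σ + iterT 𝒯 k σ ν := by
  induction n generalizing μ with
  | zero => rw [zero_add]; rfl
  | succ n ih =>
    calc iterT 𝒯 (n + 1 + k + 1) μ ν = ⨅ σ', 𝒯 μ σ' + iterT 𝒯 (n + k + 1) σ' ν := by
          rw [show n + 1 + k + 1 = n + k + 1 + 1 by omega]; rfl
      _ = ⨅ σ', ⨅ σ, 𝒯 μ σ' + (iterT 𝒯 n σ' σ + iterT 𝒯 k σ ν) := by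
          refine iInf_congr fun σ' => ?_
          rw [ih]
          exact EReal.add_iInf (iterT_ne_bot hm 0 μ σ') (iterT_ne_top hM 0 μ σ') _
      _ = ⨅ σ, ⨅ σ', (𝒯 μ σ' + iterT 𝒯 n σ' σ) + iterT 𝒯 k σ ν := by
          rw [iInf_comm]; simp only [add_assoc]
      _ = ⨅ σ, iterT 𝒯 (n + 1) μ σ + iterT 𝒯 k σ ν := by
          refine iInf_congr fun σ => ?_
          rw [← EReal.iInf_add (iterT_ne_bot hm k σ ν) (iterT_ne_top hM k σ ν)]; rfl

lemma le_toReal_iterT (n : ℕ) (μ ν : ProbabilityMeasure X) :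
    ((n : ℝ) + 1) * m ≤ (iterT 𝒯 n μ ν).toReal := by
  have h := le_iterT hm n μ ν
  rwa [← coe_toReal_iterT hm hM, EReal.coe_le_coe_iff] at h

lemma toReal_iterT_le (n : ℕ) (μ ν : ProbabilityMeasure X) :
    (iterT 𝒯 n μ ν).toReal ≤ ((n : ℝ) + 1) * M := by
  have h := iterT_le hM n μ ν
  rwa [← coe_toReal_iterT hm hM, EReal.coe_le_coe_iff] at h

lemma toReal_iterT_add (n k : ℕ) (μ ν : ProbabilityMeasure X) :
    (iterT 𝒯 (n + k + 1) μ ν).toReal =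
      ⨅ σ, (iterT 𝒯 n μ σ).toReal + (iterT 𝒯 k σ ν).toReal := by
  have : Nonempty (ProbabilityMeasure X) := ⟨μ⟩
  have hbdd : BddBelow (range fun σ => (iterT 𝒯 n μ σ).toReal + (iterT 𝒯 k σ ν).toReal) :=
    ⟨_, forall_mem_range.2 fun σ =>
      add_le_add (le_toReal_iterT hm hM n μ σ) (le_toReal_iterT hm hM k σ ν)⟩
  rw [← EReal.coe_eq_coe_iff, coe_toReal_iterT hm hM, EReal.coe_ciInf hbdd, iterT_add hm hM]
  simp only [EReal.coe_add, coe_toReal_iterT hm hM]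

lemma toReal_iterT_add_le (n k : ℕ) (μ ν σ : ProbabilityMeasure X) :
    (iterT 𝒯 (n + k + 1) μ ν).toReal ≤ (iterT 𝒯 n μ σ).toReal + (iterT 𝒯 k σ ν).toReal := by
  have h : iterT 𝒯 (n + k + 1) μ ν ≤ iterT 𝒯 n μ σ + iterT 𝒯 k σ ν :=
    (iterT_add hm hM n k μ ν).trans_le (iInf_le _ σ)
  rwa [← coe_toReal_iterT hm hM (n + k + 1), ← coe_toReal_iterT hm hM n,
    ← coe_toReal_iterT hm hM k, ← EReal.coe_add, EReal.coe_le_coe_iff] at h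

lemma bddBelow_range_toReal_iterT (n : ℕ) :
    BddBelow (range fun p : ProbabilityMeasure X × ProbabilityMeasure X =>
      (iterT 𝒯 n p.1 p.2).toReal) :=
  ⟨_, forall_mem_range.2 fun p => le_toReal_iterT hm hM n p.1 p.2⟩

lemma infIterT_le (n : ℕ) (μ ν : ProbabilityMeasure X) :
    infIterT 𝒯 n ≤ (iterT 𝒯 n μ ν).toReal :=
  ciInf_le (bddBelow_range_toReal_iterT hm hM n) (μ, ν)

lemma le_infIterT [Nonempty (ProbabilityMeasure X)] (n : ℕ) : ((n : ℝ) + 1) * m ≤ infIterT 𝒯 n :=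
  le_ciInf fun p => le_toReal_iterT hm hM n p.1 p.2

lemma toReal_iInf_iterT [Nonempty (ProbabilityMeasure X)] (n : ℕ) :
    (⨅ p : ProbabilityMeasure X × ProbabilityMeasure X, iterT 𝒯 n p.1 p.2).toReal =
      infIterT 𝒯 n := by
  rw [infIterT, ← EReal.toReal_coe (⨅ p : ProbabilityMeasure X × ProbabilityMeasure X, _),
    EReal.coe_ciInf (bddBelow_range_toReal_iterT hm hM n)]
  simp only [coe_toReal_iterT hm hM]

lemma infIterT_add_le [Nonempty (ProbabilityMeasure X)] (n k : ℕ) :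
    infIterT 𝒯 n + infIterT 𝒯 k ≤ infIterT 𝒯 (n + k + 1) :=
  le_ciInf fun p => by
    rw [toReal_iterT_add hm hM]
    exact le_ciInf fun σ => add_le_add (infIterT_le hm hM n p.1 σ) (infIterT_le hm hM k σ p.2)

lemma toReal_iterT_add_two_le (n : ℕ) (μ ν : ProbabilityMeasure X) :
    (iterT 𝒯 (n + 1 + 1) μ ν).toReal ≤ infIterT 𝒯 n + 2 * M := by
  have : Nonempty (ProbabilityMeasure X) := ⟨μ⟩
  rw [← sub_le_iff_le_add]
  refine le_ciInf fun p => ?_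
  have h₁ := toReal_iterT_add_le hm hM 0 (n + 1) μ ν p.1
  have h₂ := toReal_iterT_add_le hm hM n 0 p.1 ν p.2
  have h₃ := toReal_iterT_le hm hM 0 μ p.1
  have h₄ := toReal_iterT_le hm hM 0 p.2 ν
  rw [zero_add] at h₁
  rw [add_zero] at h₂
  push_cast at h₃ h₄
  linarith

lemma toReal_iterT_le_infIterT_add (n : ℕ) (μ ν : ProbabilityMeasure X) :
    (iterT 𝒯 n μ ν).toReal ≤ infIterT 𝒯 n + 2 * (M - m) := by
  have : Nonempty (ProbabilityMeasure X) := ⟨μ⟩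
  have hmM : m ≤ M := EReal.coe_le_coe_iff.1 ((hm μ μ).trans (hM μ μ))
  rcases n with _ | _ | n
  · have h₁ := toReal_iterT_le hm hM 0 μ ν
    have h₂ := le_infIterT hm hM 0
    push_cast at h₁ h₂
    linarith
  · have h₁ := toReal_iterT_le hm hM 1 μ ν
    have h₂ := le_infIterT hm hM 1
    push_cast at h₁ h₂
    linarith
  · have h₁ := toReal_iterT_add_two_le hm hM n μ ν
    have h₂ := infIterT_add_le hm hM n 1
    have h₃ := le_infIterT hm hM 1
    push_cast at h₃
    linarith

lemma infIterT_add_succ_le [Nonempty (ProbabilityMeasure X)] (n k : ℕ) :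
    infIterT 𝒯 (n + k + 1) ≤ infIterT 𝒯 n + infIterT 𝒯 k + 4 * (M - m) := by
  obtain ⟨μ⟩ := ‹Nonempty (ProbabilityMeasure X)›
  linarith [infIterT_le hm hM (n + k + 1) μ μ, toReal_iterT_add_le hm hM n k μ μ μ,
    toReal_iterT_le_infIterT_add hm hM n μ μ, toReal_iterT_le_infIterT_add hm hM k μ μ]

section limit

variable [Nonempty (ProbabilityMeasure X)] {c : ℝ}
  (hc : Tendsto (fun n : ℕ => infIterT 𝒯 n / ((n : ℝ) + 1)) atTop (𝓝 c))
include hc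

lemma infIterT_le_succ_mul (n : ℕ) : infIterT 𝒯 n ≤ ((n : ℝ) + 1) * c := by
  have h := succ_mul_le_of_add_succ_le (a := fun n => -infIterT 𝒯 n) (c := -c)
    (fun n k => by linarith [infIterT_add_le hm hM n k]) (by simpa only [neg_div] using hc.neg) n
  linarith

lemma succ_mul_sub_le_infIterT (n : ℕ) : ((n : ℝ) + 1) * c - 4 * (M - m) ≤ infIterT 𝒯 n := by
  have hlim := hc.add (tendsto_const_div_natCast_add_one_nhds_zero (4 * (M - m)))
  rw [add_zero] at hlim
  have h := succ_mul_le_of_add_succ_le (a := fun n => infIterT 𝒯 n + 4 * (M - m)) (c := c)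
    (fun n k => by linarith [infIterT_add_succ_le hm hM n k]) (by simpa only [add_div] using hlim) n
  linarith

end limit

lemma abs_toReal_iterT_sub_le {c : ℝ}
    (hc : Tendsto (fun n : ℕ => (⨅ p : ProbabilityMeasure X × ProbabilityMeasure X,
      iterT 𝒯 n p.1 p.2).toReal / ((n : ℝ) + 1)) atTop (𝓝 c))
    (n : ℕ) (μ ν : ProbabilityMeasure X) :
    |(iterT 𝒯 n μ ν).toReal - ((n : ℝ) + 1) * c| ≤ 4 * (M - m) := by
  have : Nonempty (ProbabilityMeasure X) := ⟨μ⟩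
  have hmM : m ≤ M := EReal.coe_le_coe_iff.1 ((hm μ μ).trans (hM μ μ))
  simp only [toReal_iInf_iterT hm hM] at hc
  rw [abs_le]
  constructor
  · linarith [succ_mul_sub_le_infIterT hm hM hc n, infIterT_le hm hM n μ ν]
  · linarith [infIterT_le_succ_mul hm hM hc n, toReal_iterT_le_infIterT_add hm hM n μ ν]

lemma abs_toReal_iSup_integral_sub_iterT_sub_le {c K : ℝ}
    (hK : ∀ n μ ν, |(iterT 𝒯 n μ ν).toReal - ((n : ℝ) + 1) * c| ≤ K)
    {g : X → ℝ} {C : ℝ} (hg : ∀ y, ‖g y‖ ≤ C) (n : ℕ) (μ : ProbabilityMeasure X) :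
    |(⨆ σ : ProbabilityMeasure X, ((∫ y, g y ∂(σ : Measure X) : ℝ) : EReal) - iterT 𝒯 n μ σ).toReal
      - ((n : ℝ) + 1) * -c| ≤ C + K := by
  have : Nonempty (ProbabilityMeasure X) := ⟨μ⟩
  have hterm : ∀ σ : ProbabilityMeasure X,
      ((∫ y, g y ∂(σ : Measure X) : ℝ) : EReal) - iterT 𝒯 n μ σ =
        ((∫ y, g y ∂(σ : Measure X) - (iterT 𝒯 n μ σ).toReal : ℝ) : EReal) := fun σ => by
    rw [EReal.coe_sub, coe_toReal_iterT hm hM]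
  rw [iSup_congr hterm]
  refine EReal.abs_toReal_iSup_coe_sub_le fun σ => ?_
  have hgσ : |∫ y, g y ∂(σ : Measure X)| ≤ C := by
    simpa using norm_integral_le_of_norm_le_const (μ := (σ : Measure X)) (ae_of_all _ hg)
  have hσ := abs_le.1 (hK n μ σ)
  rw [abs_le] at hgσ ⊢
  constructor <;> linarith

end iterT

theorem stmt10_general {X : Type*} [MetricSpace X] [CompactSpace X] [MeasurableSpace X]
    (𝒯 : ProbabilityMeasure X → ProbabilityMeasure X → EReal)
    (hbddabove : ∃ M : ℝ, ∀ μ ν, 𝒯 μ ν ≤ (M : EReal))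
    (hbdd : ∃ m : ℝ, ∀ μ ν, (m : EReal) ≤ 𝒯 μ ν)
    (c : ℝ)
    (hc : Tendsto
      (fun n : ℕ =>
        (⨅ p : ProbabilityMeasure X × ProbabilityMeasure X,
          iterT 𝒯 n p.1 p.2).toReal / ((n : ℝ) + 1))
      atTop (nhds c)) :
    (∃ K : ℝ, ∀ (n : ℕ) (μ ν : ProbabilityMeasure X),
      ((((n : ℝ) + 1) * c - K : ℝ) : EReal) ≤ iterT 𝒯 n μ ν ∧
      iterT 𝒯 n μ ν ≤ ((((n : ℝ) + 1) * c + K : ℝ) : EReal)) ∧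
    TendstoUniformly
      (fun (n : ℕ) (p : ProbabilityMeasure X × ProbabilityMeasure X) =>
        (iterT 𝒯 n p.1 p.2).toReal / ((n : ℝ) + 1))
      (fun _ => c) atTop ∧
    ∀ g : C(X, ℝ),
      TendstoUniformly
        (fun (n : ℕ) (x : X) =>
          (⨆ σ : ProbabilityMeasure X,
            (((∫ y, g y ∂(σ : Measure X)) : ℝ) : EReal)
              - iterT 𝒯 n (diracP x) σ).toReal / ((n : ℝ) + 1))
        (fun _ => -c) atTop := by
  obtain ⟨M, hM⟩ := hbddabove
  obtain ⟨m, hm⟩ := hbdd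
  have hK := abs_toReal_iterT_sub_le hm hM hc
  refine ⟨⟨4 * (M - m), fun n μ ν => ?_⟩,
    tendstoUniformly_div_succ_of_abs_sub_le fun n p => hK n p.1 p.2,
    fun g => tendstoUniformly_div_succ_of_abs_sub_le fun n x =>
      abs_toReal_iSup_integral_sub_iterT_sub_le hm hM hK g.norm_coe_le_norm n (diracP x)⟩
  obtain ⟨hlo, hhi⟩ := abs_le.1 (hK n μ ν)
  rw [← coe_toReal_iterT hm hM n μ ν]
  exact ⟨EReal.coe_le_coe_iff.2 (by linarith), EReal.coe_le_coe_iff.2 (by linarith)⟩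

/-- Let `𝒯` be a backward linear transfer on `P(X) × P(X)` which is
bounded above (and below). Then `𝒯` has bounded oscillations: there is `K` with
`|𝒯_n(μ, ν) − n c(𝒯)| ≤ K` for all `μ, ν, n`; consequently `𝒯_n(μ, ν)/n → c(𝒯)` uniformly
on `P(X) × P(X)`, and for every `g ∈ C(X)`, `T^n g (x)/n → −c(𝒯)` uniformly in `x`. -/
theorem stmt10 {X : Type*} [MetricSpace X] [CompactSpace X] [MeasurableSpace X] [BorelSpace X]
    (𝒯 : ProbabilityMeasure X → ProbabilityMeasure X → EReal)
    (hbddabove : ∃ M : ℝ, ∀ μ ν, 𝒯 μ ν ≤ (M : EReal))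
    (hbdd : ∃ m : ℝ, ∀ μ ν, (m : EReal) ≤ 𝒯 μ ν)
    (hlsc : LowerSemicontinuous
      (fun p : ProbabilityMeasure X × ProbabilityMeasure X => 𝒯 p.1 p.2))
    (hconv : ∀ (μ₁ ν₁ μ₂ ν₂ μ ν : ProbabilityMeasure X) (t : ℝ), 0 ≤ t → t ≤ 1 →
      (μ : Measure X) =
        ENNReal.ofReal t • (μ₁ : Measure X) + ENNReal.ofReal (1 - t) • (μ₂ : Measure X) →
      (ν : Measure X) =
        ENNReal.ofReal t • (ν₁ : Measure X) + ENNReal.ofReal (1 - t) • (ν₂ : Measure X) →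
      𝒯 μ ν ≤ (t : EReal) * 𝒯 μ₁ ν₁ + ((1 - t : ℝ) : EReal) * 𝒯 μ₂ ν₂)
    (c : ℝ)
    (hc : Tendsto
      (fun n : ℕ =>
        (⨅ p : ProbabilityMeasure X × ProbabilityMeasure X,
          iterT 𝒯 n p.1 p.2).toReal / ((n : ℝ) + 1))
      atTop (nhds c)) :
    (∃ K : ℝ, ∀ (n : ℕ) (μ ν : ProbabilityMeasure X),
      ((((n : ℝ) + 1) * c - K : ℝ) : EReal) ≤ iterT 𝒯 n μ ν ∧
      iterT 𝒯 n μ ν ≤ ((((n : ℝ) + 1) * c + K : ℝ) : EReal)) ∧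
    TendstoUniformly
      (fun (n : ℕ) (p : ProbabilityMeasure X × ProbabilityMeasure X) =>
        (iterT 𝒯 n p.1 p.2).toReal / ((n : ℝ) + 1))
      (fun _ => c) atTop ∧
    ∀ g : C(X, ℝ),
      TendstoUniformly
        (fun (n : ℕ) (x : X) =>
          (⨆ σ : ProbabilityMeasure X,
            (((∫ y, g y ∂(σ : Measure X)) : ℝ) : EReal)
              - iterT 𝒯 n (diracP x) σ).toReal / ((n : ℝ) + 1))
        (fun _ => -c) atTop :=
  stmt10_general 𝒯 hbddabove hbdd c hc
end

section
/- Let X be a compact metric space, σ : X → X continuous and surjective, A : X → ℝ continuous, and suppose the transfer 𝒯(μ, ν) = ∫ A dμ if ν = σ_# μ (+∞ otherwise) has bounded oscillations. Then there exists a bounded-above function h in USC_σ(X) such that h(σ(x)) − A(x) + c(𝒯) = h(x) for all x ∈ X, where c(𝒯) = inf{∫ A dμ : σ_# μ = μ}. -/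
open MeasureTheory Filter Topology
open scoped ENNReal Classical

/-! With `B = A - c`, bounded oscillations say that the Birkhoff sums `S_n B` are bounded below
(evaluate `𝒯_n` at Dirac masses), while invariant measures with `∫ A` close to `c` give, for each
`n`, a point where `S_n B ≤ 1`; by compactness a single point `x₀` has `S_n B x₀` bounded above
uniformly in `n`. Since `T^n 0 + n c = -S_n B`, take `h = liminf_n (T^n 0 + n c)`: it is bounded
above, finite at `x₀`, the increasing limit of the upper semicontinuous `inf_{m ≥ n} (-S_m B)`,
and the cocycle identity `S_{n+1} B x = B x + S_n B (σ x)` gives `h ∘ σ = B + h`. -/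

namespace EReal

theorem liminf_const_add {α : Type*} {f : Filter α} [NeBot f] (d : ℝ) (u : α → EReal) :
    liminf (fun n => (d : EReal) + u n) f = d + liminf u f := by
  refine le_antisymm ?_ ?_
  · have h := liminf_add_le (f := f) (u := fun _ => (d : EReal)) (v := u)
      (.inl (by simp)) (.inl (by simp))
    rwa [limsup_const] at h
  · have h := le_liminf_add (f := f) (u := fun _ => (d : EReal)) (v := u)
    rwa [liminf_const] at h

theorem coe_sub_add_sub_add (a b : ℝ) (z : EReal) : ((a - b : ℝ) : EReal) + z - a + b = z := by
  induction z with
  | bot => simp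
  | coe r => norm_cast; ring
  | top => rw [coe_add_top, top_sub_coe, top_add_coe]

end EReal

section Birkhoff

variable {α : Type*}

theorem birkhoffSum_sub_const (f : α → α) (g : α → ℝ) (c : ℝ) (n : ℕ) (x : α) :
    birkhoffSum f (fun x => g x - c) n x = birkhoffSum f g n x - n * c := by
  simp [birkhoffSum, Finset.sum_sub_distrib]

noncomputable def liminfNegBirkhoffSum (f : α → α) (g : α → ℝ) (x : α) : EReal :=
  liminf (fun n => ((-birkhoffSum f g n x : ℝ) : EReal)) atTop

theorem liminfNegBirkhoffSum_apply (f : α → α) (g : α → ℝ) (x : α) :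
    liminfNegBirkhoffSum f g (f x) = g x + liminfNegBirkhoffSum f g x := by
  have hshift : ∀ n, ((-birkhoffSum f g n (f x) : ℝ) : EReal) =
      g x + ((-birkhoffSum f g (n + 1) x : ℝ) : EReal) := fun n => by
    rw [birkhoffSum_succ', ← EReal.coe_add]
    ring_nf
  simp only [liminfNegBirkhoffSum, hshift, EReal.liminf_const_add,
    liminf_nat_add (fun n => ((-birkhoffSum f g n x : ℝ) : EReal)) 1]

end Birkhoff

section Topological

variable {X : Type*} [TopologicalSpace X]

theorem Continuous.birkhoffSum {f : X → X} (hf : Continuous f) {g : X → ℝ} (hg : Continuous g)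
    (n : ℕ) : Continuous (birkhoffSum f g n) :=
  continuous_finsetSum _ fun k _ => hg.comp (hf.iterate k)

theorem exists_forall_birkhoffSum_le [CompactSpace X] {f : X → X} (hf : Continuous f)
    {g : X → ℝ} (hg : Continuous g) {K C : ℝ} (hlow : ∀ n x, -K ≤ birkhoffSum f g n x)
    (hup : ∀ n, ∃ x, birkhoffSum f g n x ≤ C) :
    ∃ x, ∀ n, birkhoffSum f g n x ≤ C + K := by
  set t : ℕ → Set X := fun N => ⋂ k ∈ Finset.range (N + 1), {x | birkhoffSum f g k x ≤ C + K}
  have htn : ∀ N, (t N).Nonempty := fun N => by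
    obtain ⟨x, hx⟩ := hup N
    refine ⟨x, Set.mem_iInter₂.2 fun k hk => ?_⟩
    have hsplit := birkhoffSum_add f g k (N - k) x
    rw [Nat.add_sub_cancel' (Finset.mem_range_succ_iff.1 hk)] at hsplit
    have := hlow (N - k) (f^[k] x)
    simp only [Set.mem_ofPred_eq]
    linarith
  have htcl : ∀ N, IsClosed (t N) := fun N =>
    isClosed_biInter fun k _ => isClosed_le (hf.birkhoffSum hg k) continuous_const
  have htd : ∀ N, t (N + 1) ⊆ t N := fun N => Set.biInter_subset_biInter_left
    (Finset.coe_subset.2 (Finset.range_subset_range.2 (N + 1).le_succ))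
  obtain ⟨x, hx⟩ := IsCompact.nonempty_iInter_of_sequence_nonempty_isCompact_isClosed t htd htn
    (htcl 0).isCompact htcl
  exact ⟨x, fun n => Set.mem_iInter₂.1 (Set.mem_iInter.1 hx n) n (Finset.self_mem_range_succ n)⟩

theorem exists_monotone_upperSemicontinuous_iSup_eq_liminf {δ : Type*} [CompleteLinearOrder δ]
    [TopologicalSpace δ] {φ : ℕ → X → δ}
    (hφ : ∀ n, UpperSemicontinuous (φ n)) :
    ∃ u : ℕ → X → δ, (∀ n, UpperSemicontinuous (u n)) ∧ (∀ n x, u n x ≤ u (n + 1) x) ∧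
      ∀ x, liminf (fun n => φ n x) atTop = ⨆ n, u n x := by
  refine ⟨fun N x => ⨅ i, φ (i + N) x, fun N => upperSemicontinuous_iInf fun i => hφ _,
    fun N x => le_iInf fun i => iInf_le_of_le (i + 1) ?_, fun x => liminf_eq_iSup_iInf_of_nat'⟩
  rw [add_assoc, add_comm 1 N]

end Topological

theorem MeasureTheory.MeasurePreserving.exists_birkhoffSum_le {X : Type*} [MeasurableSpace X]
    {μ : Measure X} [IsProbabilityMeasure μ] {σ : X → X} (hσ : MeasurePreserving σ μ μ)
    {A : X → ℝ} (hA : Integrable A μ) (n : ℕ) :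
    ∃ x, birkhoffSum σ A n x ≤ n * ∫ x, A x ∂μ := by
  have hint : ∀ k, Integrable (fun x => A (σ^[k] x)) μ := fun k =>
    (hσ.iterate k).integrable_comp_of_integrable hA
  have hcomp : ∀ k, ∫ x, A (σ^[k] x) ∂μ = ∫ x, A x ∂μ := fun k => by
    have hk := hσ.iterate k
    have hAm : AEStronglyMeasurable A (μ.map σ^[k]) := hk.map_eq.symm ▸ hA.aestronglyMeasurable
    rw [← integral_map hk.measurable.aemeasurable hAm, hk.map_eq]
  have hsum : ∫ x, birkhoffSum σ A n x ∂μ = n * ∫ x, A x ∂μ := by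
    simp only [birkhoffSum]
    rw [integral_finsetSum _ fun k _ => hint k]
    simp [hcomp]
  have hSint : Integrable (birkhoffSum σ A n) μ := integrable_finsetSum _ fun k _ => hint k
  simpa [hsum] using exists_le_integral hSint

section Transfer

variable {X : Type*} [MeasurableSpace X]

noncomputable def mapTransfer (σ : X → X) (A : X → ℝ) (μ ν : ProbabilityMeasure X) : EReal :=
  if (μ : Measure X).map σ = ν then ((∫ x, A x ∂(μ : Measure X) : ℝ) : EReal) else ⊤

theorem iInf_mapTransfer_add {σ : X → X} (hσ : Measurable σ) (A : X → ℝ)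
    (μ : ProbabilityMeasure X) {F : ProbabilityMeasure X → EReal} (hF : ∀ ρ, F ρ ≠ ⊥) :
    ⨅ ρ, mapTransfer σ A μ ρ + F ρ =
      ((∫ x, A x ∂(μ : Measure X) : ℝ) : EReal) + F (μ.map hσ.aemeasurable) := by
  refine le_antisymm (iInf_le_of_le (μ.map hσ.aemeasurable) (by simp [mapTransfer]))
    (le_iInf fun ρ => ?_)
  by_cases hρ : (μ : Measure X).map σ = ρ
  · obtain rfl : μ.map hσ.aemeasurable = ρ := Subtype.ext hρ
    simp [mapTransfer]
  · simp [mapTransfer, hρ, EReal.top_add_of_ne_bot (hF ρ)]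

theorem iterT_mapTransfer {σ : X → X} (hσ : Measurable σ) {A : X → ℝ}
    (hA : StronglyMeasurable A) (n : ℕ) (μ ν : ProbabilityMeasure X) :
    iterT (mapTransfer σ A) n μ ν =
      if (μ : Measure X).map σ^[n + 1] = ν then
        ((∑ k ∈ Finset.range (n + 1), ∫ x, A (σ^[k] x) ∂(μ : Measure X) : ℝ) : EReal)
      else ⊤ := by
  induction n generalizing μ with
  | zero => simp [iterT, mapTransfer]
  | succ n ih =>
    have hpush : ∀ k, ∫ x, A (σ^[k] x) ∂((μ : Measure X).map σ) =
        ∫ x, A (σ^[k + 1] x) ∂(μ : Measure X) := fun k =>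
      integral_map hσ.aemeasurable (hA.comp_measurable (hσ.iterate k)).aestronglyMeasurable
    have hne : ∀ ρ, iterT (mapTransfer σ A) n ρ ν ≠ ⊥ := fun ρ => by
      rw [ih]; split_ifs <;> simp
    dsimp only [iterT]
    rw [iInf_mapTransfer_add hσ A μ hne, ih]
    simp only [ProbabilityMeasure.toMeasure_map, Measure.map_map (hσ.iterate (n + 1)) hσ,
      ← Function.iterate_succ, hpush]
    split_ifs
    · rw [Finset.sum_range_succ' _ (n + 1)]
      norm_cast
      simp [add_comm]
    · simp

theorem iterT_mapTransfer_diracProba {σ : X → X} (hσ : Measurable σ) {A : X → ℝ}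
    (hA : StronglyMeasurable A) (n : ℕ) (x : X) :
    iterT (mapTransfer σ A) n (diracProba x)
        ((diracProba x).map (hσ.iterate (n + 1)).aemeasurable) =
      ((birkhoffSum σ A (n + 1) x : ℝ) : EReal) := by
  rw [iterT_mapTransfer hσ hA, if_pos (ProbabilityMeasure.toMeasure_map _ _).symm]
  exact congrArg _ (Finset.sum_congr rfl fun k _ =>
    integral_dirac' _ x (hA.comp_measurable (hσ.iterate k)))

theorem le_birkhoffSum_of_le_iInf_iterT {σ : X → X} (hσ : Measurable σ) {A : X → ℝ}
    (hA : StronglyMeasurable A) {a : EReal} {n : ℕ}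
    (h : a ≤ ⨅ p : ProbabilityMeasure X × ProbabilityMeasure X,
      iterT (mapTransfer σ A) n p.1 p.2) (x : X) :
    a ≤ birkhoffSum σ A (n + 1) x :=
  (h.trans (iInf_le _ (_, _))).trans_eq (iterT_mapTransfer_diracProba hσ hA n x)

theorem neg_le_birkhoffSum_sub_of_le_iInf_iterT {σ : X → X} (hσ : Measurable σ) {A : X → ℝ}
    (hA : StronglyMeasurable A) {c K : ℝ}
    (hK : ∀ n : ℕ, ((((n : ℝ) + 1) * c - K : ℝ) : EReal) ≤
      ⨅ p : ProbabilityMeasure X × ProbabilityMeasure X, iterT (mapTransfer σ A) n p.1 p.2)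
    (n : ℕ) (x : X) :
    -max K 0 ≤ birkhoffSum σ (fun x => A x - c) n x := by
  rw [birkhoffSum_sub_const]
  cases n with
  | zero => simp
  | succ n =>
    have h := le_birkhoffSum_of_le_iInf_iterT hσ hA (hK n) x
    norm_cast at h
    push_cast at h ⊢
    linarith [le_max_left K 0]

theorem exists_birkhoffSum_sub_le_one {σ : X → X} (hσ : Measurable σ) {A : X → ℝ}
    (hA : ∀ μ : ProbabilityMeasure X, Integrable A μ) {c : ℝ}
    (hc : (c : EReal) =
      ⨅ μ : {μ : ProbabilityMeasure X // (μ : Measure X).map σ = (μ : Measure X)},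
        ((∫ x, A x ∂((μ : ProbabilityMeasure X) : Measure X) : ℝ) : EReal))
    (n : ℕ) :
    ∃ x, birkhoffSum σ (fun x => A x - c) n x ≤ 1 := by
  set ε : ℝ := 1 / (n + 1)
  have hε : (n : ℝ) * ε ≤ 1 := by
    rw [mul_one_div, div_le_one (by positivity)]
    linarith
  have hlt : (c : EReal) < (c + ε : ℝ) := EReal.coe_lt_coe_iff.2 (by simp [ε]; positivity)
  rw [hc, iInf_lt_iff] at hlt
  obtain ⟨⟨μ, hμ⟩, hμA⟩ := hlt
  obtain ⟨x, hx⟩ := MeasurePreserving.exists_birkhoffSum_le ⟨hσ, hμ⟩ (hA μ) n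
  refine ⟨x, ?_⟩
  have hμA : ∫ x, A x ∂(μ : Measure X) ≤ c + ε := (EReal.coe_lt_coe_iff.1 hμA).le
  rw [birkhoffSum_sub_const]
  nlinarith [mul_le_mul_of_nonneg_left hμA (Nat.cast_nonneg (α := ℝ) n)]

end Transfer

theorem stmt19_general {X : Type*} [MetricSpace X] [CompactSpace X]
    [MeasurableSpace X] [BorelSpace X]
    (σ : X → X) (hσc : Continuous σ)
    (A : C(X, ℝ))
    (𝒯 : ProbabilityMeasure X → ProbabilityMeasure X → EReal)
    (h𝒯 : ∀ μ ν : ProbabilityMeasure X,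
      𝒯 μ ν = if (μ : Measure X).map σ = (ν : Measure X)
        then (((∫ x, A x ∂(μ : Measure X)) : ℝ) : EReal) else ⊤)
    (c : ℝ)
    (hc : (c : EReal) =
      ⨅ μ : {μ : ProbabilityMeasure X // (μ : Measure X).map σ = (μ : Measure X)},
        (((∫ x, A x ∂((μ : ProbabilityMeasure X) : Measure X)) : ℝ) : EReal))
    (hosc : ∃ K : ℝ, ∀ n : ℕ,
      (((((n : ℝ) + 1) * c - K : ℝ)) : EReal) ≤
        ⨅ p : ProbabilityMeasure X × ProbabilityMeasure X, iterT 𝒯 n p.1 p.2) :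
    ∃ h : X → EReal,
      (∃ M : ℝ, ∀ x, h x ≤ (M : EReal)) ∧
      (∃ x, ⊥ < h x) ∧
      (∃ u : ℕ → X → EReal, (∀ n, UpperSemicontinuous (u n)) ∧
        (∀ n x, u n x ≤ u (n + 1) x) ∧ (∀ x, h x = ⨆ n : ℕ, u n x)) ∧
      (∀ x, h (σ x) - ((A x : ℝ) : EReal) + (c : EReal) = h x) := by
  obtain ⟨K, hK⟩ := hosc
  obtain rfl : 𝒯 = mapTransfer σ A := funext₂ h𝒯
  have hB : Continuous fun x => A x - c := A.continuous.sub continuous_const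
  have hlow := neg_le_birkhoffSum_sub_of_le_iInf_iterT hσc.measurable
    A.continuous.stronglyMeasurable hK
  have hup := exists_birkhoffSum_sub_le_one hσc.measurable
    (fun μ => A.continuous.integrable_of_hasCompactSupport (.of_compactSpace _)) hc
  obtain ⟨x₀, hx₀⟩ := exists_forall_birkhoffSum_le hσc hB hlow hup
  obtain ⟨u, husc, hmono, hu⟩ := exists_monotone_upperSemicontinuous_iSup_eq_liminf fun n =>
    (continuous_coe_real_ereal.comp (hσc.birkhoffSum hB n).neg).upperSemicontinuous
  refine ⟨liminfNegBirkhoffSum σ fun x => A x - c, ⟨max K 0, fun x => ?_⟩, ⟨x₀, ?_⟩,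
    ⟨u, husc, hmono, hu⟩, fun x => ?_⟩
  · refine liminf_le_of_frequently_le' (Frequently.of_forall fun n => ?_)
    exact EReal.coe_le_coe_iff.2 (by linarith [hlow n x])
  · refine (EReal.bot_lt_coe (-(1 + max K 0))).trans_le
      (le_liminf_of_le (h := Eventually.of_forall fun n => ?_))
    exact EReal.coe_le_coe_iff.2 (by linarith [hx₀ n])
  · rw [liminfNegBirkhoffSum_apply]
    exact EReal.coe_sub_add_sub_add _ _ _

/-- Let `X` be compact metric, `σ : X → X` continuous surjective,
`A : X → ℝ` continuous, and suppose the transfer `𝒯(μ, ν) = ∫ A dμ` if `ν = σ_# μ`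
(`+∞` otherwise) has bounded oscillations. Then there exists a bounded-above function
`h ∈ USC_σ(X)` (a proper increasing limit of upper semi-continuous functions) such that
`h(σ(x)) − A(x) + c(𝒯) = h(x)` for all `x`, where `c(𝒯) = inf { ∫ A dμ : σ_# μ = μ }`. -/
theorem stmt19 {X : Type*} [MetricSpace X] [CompactSpace X] [Nonempty X]
    [MeasurableSpace X] [BorelSpace X]
    (σ : X → X) (hσc : Continuous σ) (hσs : Function.Surjective σ)
    (A : C(X, ℝ))
    (𝒯 : ProbabilityMeasure X → ProbabilityMeasure X → EReal)
    (h𝒯 : ∀ μ ν : ProbabilityMeasure X,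
      𝒯 μ ν = if (μ : Measure X).map σ = (ν : Measure X)
        then (((∫ x, A x ∂(μ : Measure X)) : ℝ) : EReal) else ⊤)
    (c : ℝ)
    (hc : (c : EReal) =
      ⨅ μ : {μ : ProbabilityMeasure X // (μ : Measure X).map σ = (μ : Measure X)},
        (((∫ x, A x ∂((μ : ProbabilityMeasure X) : Measure X)) : ℝ) : EReal))
    (hosc : ∃ K : ℝ, ∀ n : ℕ,
      (((((n : ℝ) + 1) * c - K : ℝ)) : EReal) ≤
        ⨅ p : ProbabilityMeasure X × ProbabilityMeasure X, iterT 𝒯 n p.1 p.2) :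
    ∃ h : X → EReal,
      (∃ M : ℝ, ∀ x, h x ≤ (M : EReal)) ∧
      (∃ x, ⊥ < h x) ∧
      (∃ u : ℕ → X → EReal, (∀ n, UpperSemicontinuous (u n)) ∧
        (∀ n x, u n x ≤ u (n + 1) x) ∧ (∀ x, h x = ⨆ n : ℕ, u n x)) ∧
      (∀ x, h (σ x) - ((A x : ℝ) : EReal) + (c : EReal) = h x) :=
  stmt19_general σ hσc A 𝒯 h𝒯 c hc hosc
end
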